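/- Let τ > 0 and let a < b be real numbers. Define G(p) = ∫_a^b N(y; p, τ) dy for p ∈ ℝ, m(p) = (∫_a^b y · N(y; p, τ) dy)/G(p), and s²(p) = (∫_a^b (y − m(p))² · N(y; p, τ) dy)/G(p). Then p ↦ log G(p) is twice differentiable, and −(d²/dp²) log G(p) = (1/τ)·(1 − s²(p)/τ). (This is the real-valued form of the paper's output-step derivative g′(p, v_p) = (1/(v_p+σ_n²))(1 − σ̃²/(v_p+σ_n²)) in equation (3.4b).) -/

import Mathlib

open MeasureTheory Real intervalIntegral

/-- The Gaussian probability density with mean `μ` and variance `τ`. -/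
noncomputable def gauss (μ τ x : ℝ) : ℝ :=
  (Real.sqrt (2 * Real.pi * τ))⁻¹ * Real.exp (-(x - μ) ^ 2 / (2 * τ))

/-- `G τ a b p = ∫_a^b N(y; p, τ) dy`. -/
noncomputable def G (τ a b p : ℝ) : ℝ := ∫ y in a..b, gauss p τ y

/-- The mean of the Gaussian `N(·; p, τ)` truncated to `(a, b]`. -/
noncomputable def truncMean (τ a b p : ℝ) : ℝ :=
  (∫ y in a..b, y * gauss p τ y) / G τ a b p

/-- The variance of the Gaussian `N(·; p, τ)` truncated to `(a, b]`. -/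
noncomputable def truncVar (τ a b p : ℝ) : ℝ :=
  (∫ y in a..b, (y - truncMean τ a b p) ^ 2 * gauss p τ y) / G τ a b p

lemma gauss_pos {τ : ℝ} (hτ : 0 < τ) (μ x : ℝ) : 0 < gauss μ τ x := by
  have h : 0 < Real.sqrt (2 * Real.pi * τ) :=
    Real.sqrt_pos.2 (by positivity)
  exact mul_pos (inv_pos.2 h) (Real.exp_pos _)

lemma gauss_symm (μ τ x : ℝ) : gauss μ τ x = gauss x τ μ := by
  unfold gauss
  rw [show -(x - μ) ^ 2 = -(μ - x) ^ 2 by ring]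

lemma continuous_gauss (μ τ : ℝ) : Continuous (gauss μ τ) := by
  unfold gauss; fun_prop

lemma hasDerivAt_gauss {τ : ℝ} (hτ : τ ≠ 0) (μ x : ℝ) :
    HasDerivAt (gauss μ τ) (-((x - μ) / τ) * gauss μ τ x) x := by
  have h1 : HasDerivAt (fun x : ℝ => -(x - μ) ^ 2 / (2 * τ)) (-((x - μ) / τ)) x := by
    have := (((hasDerivAt_id x).sub_const μ).pow 2).neg.div_const (2 * τ)
    refine this.congr_deriv ?_
    simp only [id]
    field_simp
    ring
  have h2 := h1.exp.const_mul (Real.sqrt (2 * Real.pi * τ))⁻¹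
  refine h2.congr_deriv ?_
  unfold gauss
  ring

lemma hasDerivAt_gauss_mean {τ : ℝ} (hτ : τ ≠ 0) (x p : ℝ) :
    HasDerivAt (fun p => gauss p τ x) ((x - p) / τ * gauss p τ x) p := by
  have h := hasDerivAt_gauss hτ x p
  have he : (fun p => gauss p τ x) = gauss x τ := funext fun q => gauss_symm q τ x
  rw [he]
  convert h using 1
  rw [gauss_symm p τ x]
  ring

/-- Antiderivative of the standard centered gaussian. -/
noncomputable def Fint (τ x : ℝ) : ℝ := ∫ t in (0:ℝ)..x, gauss 0 τ t

lemma hasDerivAt_Fint (τ x : ℝ) : HasDerivAt (Fint τ) (gauss 0 τ x) x :=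
  intervalIntegral.integral_hasDerivAt_right
    ((continuous_gauss 0 τ).intervalIntegrable _ _)
    ((continuous_gauss 0 τ).stronglyMeasurableAtFilter _ _)
    (continuous_gauss 0 τ).continuousAt

lemma G_eq_Fint (τ a b p : ℝ) : G τ a b p = Fint τ (b - p) - Fint τ (a - p) := by
  unfold G
  have h1 : ∀ y : ℝ, gauss p τ y = gauss 0 τ (y - p) := by
    intro y; unfold gauss; rw [show -(y - p) ^ 2 = -(y - p - 0) ^ 2 by ring]
  simp_rw [h1]
  rw [intervalIntegral.integral_comp_sub_right (fun y => gauss 0 τ y) p]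
  have h2 := intervalIntegral.integral_add_adjacent_intervals (μ := volume)
    ((continuous_gauss 0 τ).intervalIntegrable 0 (a - p))
    ((continuous_gauss 0 τ).intervalIntegrable (a - p) (b - p))
  unfold Fint
  linarith

lemma hasDerivAt_G {τ : ℝ} (hτ : τ ≠ 0) (a b p : ℝ) :
    HasDerivAt (G τ a b) (gauss p τ a - gauss p τ b) p := by
  have hg : ∀ x : ℝ, gauss 0 τ (x - p) = gauss p τ x := by
    intro x; unfold gauss; rw [show -(x - p - 0) ^ 2 = -(x - p) ^ 2 by ring]
  have hb : HasDerivAt (fun p => Fint τ (b - p)) (-gauss p τ b) p := by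
    have := (hasDerivAt_Fint τ (b - p)).comp p ((hasDerivAt_id p).const_sub b)
    simp [hg] at this; exact this
  have ha : HasDerivAt (fun p => Fint τ (a - p)) (-gauss p τ a) p := by
    have := (hasDerivAt_Fint τ (a - p)).comp p ((hasDerivAt_id p).const_sub a)
    simp [hg] at this; exact this
  have h := hb.sub ha
  have he : (fun p => Fint τ (b - p) - Fint τ (a - p)) = G τ a b :=
    funext fun q => (G_eq_Fint τ a b q).symm
  change HasDerivAt (fun p => Fint τ (b - p) - Fint τ (a - p)) _ p at h
  rw [he] at h
  convert h using 1
  ring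

/-- `log G` is twice differentiable and `−(log G)'' (p) = (1/τ)(1 − s²(p)/τ)`. -/
theorem quantized_output_step_deriv (τ a b : ℝ) (hτ : 0 < τ) (hab : a < b) :
    (Differentiable ℝ fun p => Real.log (G τ a b p)) ∧
      (Differentiable ℝ (deriv fun p => Real.log (G τ a b p))) ∧
      ∀ p, -(deriv (deriv fun p => Real.log (G τ a b p)) p)
          = (1 / τ) * (1 - truncVar τ a b p / τ) := by
  have hτ' : τ ≠ 0 := hτ.ne'
  have hGpos : ∀ p, 0 < G τ a b p := fun p =>
    intervalIntegral_pos_of_pos ((continuous_gauss p τ).intervalIntegrable a b)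
      (fun x => gauss_pos hτ p x) hab
  have hGne : ∀ p, G τ a b p ≠ 0 := fun p => (hGpos p).ne'
  -- derivative of log G
  have hlog : ∀ p, HasDerivAt (fun p => Real.log (G τ a b p))
      ((gauss p τ a - gauss p τ b) / G τ a b p) p := fun p =>
    (hasDerivAt_G hτ' a b p).log (hGne p)
  have hd1 : (deriv fun p => Real.log (G τ a b p))
      = fun p => (gauss p τ a - gauss p τ b) / G τ a b p :=
    funext fun p => (hlog p).deriv
  -- second derivative
  have hD : ∀ p, HasDerivAt (fun p => gauss p τ a - gauss p τ b)
      ((a - p) / τ * gauss p τ a - (b - p) / τ * gauss p τ b) p := fun p =>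
    (hasDerivAt_gauss_mean hτ' a p).sub (hasDerivAt_gauss_mean hτ' b p)
  have hd2 : ∀ p, HasDerivAt (fun p => (gauss p τ a - gauss p τ b) / G τ a b p)
      ((((a - p) / τ * gauss p τ a - (b - p) / τ * gauss p τ b) * G τ a b p
        - (gauss p τ a - gauss p τ b) * (gauss p τ a - gauss p τ b)) / (G τ a b p) ^ 2) p :=
    fun p => (hD p).div (hasDerivAt_G hτ' a b p) (hGne p)
  refine ⟨fun p => (hlog p).differentiableAt, ?_, ?_⟩
  · rw [hd1]; exact fun p => (hd2 p).differentiableAt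
  intro p
  rw [hd1, (hd2 p).deriv]
  -- now compute truncVar in closed form
  set gA := gauss p τ a with hgA
  set gB := gauss p τ b with hgB
  set Gv := G τ a b p with hGv
  have hGvne : Gv ≠ 0 := hGne p
  have hcont : Continuous (gauss p τ) := continuous_gauss p τ
  -- first moment identity
  have hI1 : (∫ y in a..b, (y - p) * gauss p τ y) = τ * (gA - gB) := by
    have hfd : ∀ y ∈ Set.uIcc a b,
        HasDerivAt (fun y => -τ * gauss p τ y) ((y - p) * gauss p τ y) y := by
      intro y _
      have := (hasDerivAt_gauss hτ' p y).const_mul (-τ)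
      refine this.congr_deriv ?_
      field_simp
    have hint : IntervalIntegrable (fun y => (y - p) * gauss p τ y) volume a b :=
      (((continuous_id.sub continuous_const)).mul hcont).intervalIntegrable a b
    rw [intervalIntegral.integral_eq_sub_of_hasDerivAt hfd hint]
    ring
  -- basic integrability facts
  have ii0 : IntervalIntegrable (gauss p τ) volume a b := hcont.intervalIntegrable a b
  have ii1 : IntervalIntegrable (fun y => (y - p) * gauss p τ y) volume a b :=
    ((continuous_id.sub continuous_const).mul hcont).intervalIntegrable a b
  have ii2 : IntervalIntegrable (fun y => (y - p) ^ 2 * gauss p τ y) volume a b :=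
    (((continuous_id.sub continuous_const).pow 2).mul hcont).intervalIntegrable a b
  have hGint : (∫ y in a..b, gauss p τ y) = Gv := rfl
  -- second moment identity
  have hI2 : (∫ y in a..b, (y - p) ^ 2 * gauss p τ y)
      = τ * Gv - τ * ((b - p) * gB - (a - p) * gA) := by
    have hfd : ∀ y ∈ Set.uIcc a b,
        HasDerivAt (fun y => (y - p) * gauss p τ y)
          (gauss p τ y - (y - p) ^ 2 / τ * gauss p τ y) y := by
      intro y _
      have := ((hasDerivAt_id y).sub_const p).mul (hasDerivAt_gauss hτ' p y)
      refine this.congr_deriv ?_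
      simp only [id]
      field_simp
      ring
    have hint : IntervalIntegrable (fun y => gauss p τ y - (y - p) ^ 2 / τ * gauss p τ y)
        volume a b :=
      (hcont.sub ((((continuous_id.sub continuous_const).pow 2).div_const τ).mul
        hcont)).intervalIntegrable a b
    have h := intervalIntegral.integral_eq_sub_of_hasDerivAt hfd hint
    have key : ∀ y : ℝ, (y - p) ^ 2 * gauss p τ y
        = τ * (gauss p τ y - (gauss p τ y - (y - p) ^ 2 / τ * gauss p τ y)) := by
      intro y; field_simp
      ring
    simp_rw [key]
    rw [intervalIntegral.integral_const_mul, intervalIntegral.integral_sub ii0 hint, h, hGint]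
    ring
  -- the truncated mean in closed form
  have hMean : truncMean τ a b p = p + τ * (gA - gB) / Gv := by
    unfold truncMean
    have key : ∀ y : ℝ, y * gauss p τ y = (y - p) * gauss p τ y + p * gauss p τ y := by
      intro y; ring
    simp_rw [key]
    rw [intervalIntegral.integral_add ii1 (ii0.const_mul p),
      intervalIntegral.integral_const_mul, hI1, hGint]
    rw [show (G τ a b p) = Gv from rfl]
    field_simp
    ring
  -- the truncated variance in closed form
  have hVar : truncVar τ a b p
      = (τ * Gv - τ * ((b - p) * gB - (a - p) * gA)
          + 2 * (p - truncMean τ a b p) * (τ * (gA - gB))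
          + (p - truncMean τ a b p) ^ 2 * Gv) / Gv := by
    unfold truncVar
    have key : ∀ y : ℝ, (y - truncMean τ a b p) ^ 2 * gauss p τ y
        = (y - p) ^ 2 * gauss p τ y + (2 * (p - truncMean τ a b p)) * ((y - p) * gauss p τ y)
          + (p - truncMean τ a b p) ^ 2 * gauss p τ y := by
      intro y; ring
    simp_rw [key]
    rw [intervalIntegral.integral_add (ii2.add (ii1.const_mul _)) (ii0.const_mul _),
      intervalIntegral.integral_add ii2 (ii1.const_mul _),
      intervalIntegral.integral_const_mul, intervalIntegral.integral_const_mul,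
      hI1, hI2, hGint]
  rw [hVar, hMean]
  field_simp
  ring
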